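/- arXiv:1103.2905 — 2 statements merged into one kernel-verified Lean document; each statement's English description precedes it below -/
import Mathlib

section
/- The function (x, r) ↦ δ_x(r), defined for x ∈ ℂ and r > 0 where δ_x(r) is the supremum of radii of open disks contained in D(x,r) \ K for a fixed compact set K ⊂ ℂ (and δ_x(r) = 0 when D(x,r) ⊆ K), is continuous in (x, r). -/
set_option autoImplicit false

open Set Metric Filter

/-- `deltaFn K x r` : the supremum of radii of open disks contained in `D(x,r) \ K`
(with `sup ∅ = 0`, and `= 0` when `D(x,r) ⊆ K`). -/
noncomputable def deltaFn (K : Set ℂ) (x : ℂ) (r : ℝ) : ℝ :=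
  sSup {s : ℝ | 0 ≤ s ∧ ∃ y : ℂ, Metric.ball y s ⊆ Metric.ball x r \ K}

/-!
A disk `D(y, s) ⊆ D(x, r)` satisfies `|y - x| + s ≤ r`. Hence shrinking a disk of `D(x, r) \ K`
by `ε = |x - x'| + |r - r'|` about the same centre gives a disk of `D(x', r') \ K`, so
`δ_x(r) ≤ δ_{x'}(r') + ε`: the function `(x, r) ↦ δ_x(r)` is Lipschitz.
-/

theorem dist_add_le_of_ball_subset_ball {E : Type*} [NormedAddCommGroup E] [NormedSpace ℝ E]
    [NontrivialTopology E] {x y : E} {r s : ℝ} (hs : 0 < s) (h : ball y s ⊆ ball x r) :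
    dist y x + s ≤ r := by
  have hcl : closedBall y s ⊆ closedBall x r := by
    rw [← closure_ball y hs.ne']
    exact closure_minimal (h.trans ball_subset_closedBall) isClosed_closedBall
  rcases eq_or_ne y x with rfl | hyx
  · obtain ⟨z, hz⟩ := (NormedSpace.sphere_nonempty (x := y)).2 hs.le
    have hzr : dist z y ≤ r := hcl (sphere_subset_closedBall hz)
    rw [mem_sphere.1 hz] at hzr
    simpa using hzr
  · -- the point of `closedBall y s` farthest from `x`
    have hd : 0 < dist x y := dist_pos.2 hyx.symm
    set z := AffineMap.lineMap x y (1 + s / dist x y)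
    have hzy : dist z y = s := by
      rw [dist_lineMap_right, sub_add_cancel_left, norm_neg, Real.norm_of_nonneg (by positivity),
        div_mul_cancel₀ _ hd.ne']
    have hzx : dist z x = dist y x + s := by
      rw [dist_lineMap_left, Real.norm_of_nonneg (by positivity), add_mul, one_mul,
        div_mul_cancel₀ _ hd.ne', dist_comm]
    rw [← hzx]
    exact hcl hzy.le

def diskRadii (K : Set ℂ) (x : ℂ) (r : ℝ) : Set ℝ :=
  {s : ℝ | 0 ≤ s ∧ ∃ y : ℂ, ball y s ⊆ ball x r \ K}

theorem zero_mem_diskRadii (K : Set ℂ) (x : ℂ) (r : ℝ) : (0 : ℝ) ∈ diskRadii K x r :=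
  ⟨le_rfl, x, by simp⟩

theorem bddAbove_diskRadii (K : Set ℂ) (x : ℂ) (r : ℝ) : BddAbove (diskRadii K x r) := by
  refine ⟨|r|, fun s ⟨hs, y, hy⟩ => ?_⟩
  rcases hs.eq_or_lt with rfl | hs
  · exact abs_nonneg r
  · have := dist_add_le_of_ball_subset_ball hs (hy.trans sdiff_subset)
    linarith [dist_nonneg (x := y) (y := x), le_abs_self r]

theorem deltaFn_nonneg (K : Set ℂ) (x : ℂ) (r : ℝ) : 0 ≤ deltaFn K x r :=
  le_csSup (bddAbove_diskRadii K x r) (zero_mem_diskRadii K x r)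

theorem le_deltaFn {K : Set ℂ} {x y : ℂ} {r s : ℝ} (hs : 0 ≤ s) (h : ball y s ⊆ ball x r \ K) :
    s ≤ deltaFn K x r :=
  le_csSup (bddAbove_diskRadii K x r) ⟨hs, y, h⟩

theorem deltaFn_le_add (K : Set ℂ) (x x' : ℂ) (r r' : ℝ) :
    deltaFn K x r ≤ deltaFn K x' r' + (dist x x' + |r - r'|) := by
  set ε := dist x x' + |r - r'|
  have hε : 0 ≤ ε := by positivity
  refine csSup_le ⟨0, zero_mem_diskRadii K x r⟩ fun s ⟨hs, y, hy⟩ => ?_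
  rcases le_or_gt s ε with hsε | hsε
  · linarith [deltaFn_nonneg K x' r']
  · have hyx : dist y x + s ≤ r :=
      dist_add_le_of_ball_subset_ball (by linarith) (hy.trans sdiff_subset)
    have hsub : ball y (s - ε) ⊆ ball x' r' \ K := fun z hz =>
      ⟨ball_subset_ball' (by linarith [dist_triangle y x x', le_abs_self (r - r')]) hz,
        (hy (ball_subset_ball (by linarith) hz)).2⟩
    linarith [le_deltaFn (sub_nonneg.2 hsε.le) hsub]

theorem lipschitzWith_deltaFn (K : Set ℂ) :
    LipschitzWith 2 (fun p : ℂ × ℝ => deltaFn K p.1 p.2) := by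
  refine LipschitzWith.of_le_add_mul 2 fun p q => ?_
  have hfst : dist p.1 q.1 ≤ dist p q := le_max_left _ _
  have hsnd : |p.2 - q.2| ≤ dist p q := le_max_right (dist p.1 q.1) _
  have := deltaFn_le_add K p.1 q.1 p.2 q.2
  push_cast
  linarith

theorem deltaFn_continuousOn_general (K : Set ℂ) :
    ContinuousOn (fun p : ℂ × ℝ => deltaFn K p.1 p.2) {p : ℂ × ℝ | 0 < p.2} :=
  (lipschitzWith_deltaFn K).continuous.continuousOn

/-- For a fixed compact `K ⊂ ℂ`, the function `(x, r) ↦ δ_x(r)` is continuous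
on `{(x, r) : r > 0}`. -/
theorem deltaFn_continuousOn (K : Set ℂ) (hK : IsCompact K) :
    ContinuousOn (fun p : ℂ × ℝ => deltaFn K p.1 p.2) {p : ℂ × ℝ | 0 < p.2} :=
  deltaFn_continuousOn_general K
end

section
/- Let g: U → ℂ be univalent on a disk U = D(x, r₀), let v = |g'(x)| > 0, and suppose t ∈ (0,1) is such that v/2 ≤ |g'(z)| ≤ 2v for all z ∈ D(x, t·r₀). If D(y, s) ⊆ D(x, t·r₀), then g(D(y,s)) ⊇ D(g(y), v·s/8) and g(D(x,r)) ⊆ D(g(x), 2·v·r) for any r with D(x,r) ⊆ D(x, t·r₀). -/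
/-!
The inner inclusion is a path-lifting argument. Where `m < ‖g'‖`, the local inverse of `g` is
`m⁻¹`-Lipschitz near each image point, so by continuity induction on `[0, 1]` the segment from
`g y` to `w` lifts to points lying within `‖w - g y‖ / m` of `y`; this is `< s` as soon as
`‖w - g y‖ < m * s`. The outer inclusion is the mean value inequality.
-/

set_option autoImplicit false

open Set Metric Filter Topology Asymptotics

theorem HasStrictDerivAt.eventually_mem_image_closedBall {𝕜 : Type*} [NontriviallyNormedField 𝕜]
    [CompleteSpace 𝕜] {f : 𝕜 → 𝕜} {f' z : 𝕜} {m : ℝ}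
    (hf : HasStrictDerivAt f f' z) (hm : 0 < m) (hf' : m < ‖f'‖) :
    ∀ᶠ w in 𝓝 (f z), w ∈ f '' closedBall z (‖w - f z‖ / m) := by
  have hf'0 : f' ≠ 0 := norm_pos_iff.mp (hm.trans hf')
  set h := hf.localInverse f f' z hf'0
  have hinv : ‖f'⁻¹‖ < m⁻¹ := by rw [norm_inv]; exact inv_strictAnti₀ hm hf'
  have hlip : IsBigOWith m⁻¹ (𝓝 (f z)) (fun w => h w - z) (fun w => w - f z) := by
    have hlin : IsBigOWith ‖f'⁻¹‖ (𝓝 (f z)) (fun w => (w - f z) • f'⁻¹) (fun w => w - f z) :=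
      .of_bound (.of_forall fun w => by rw [norm_smul, mul_comm])
    have := (hf.to_localInverse hf'0).hasDerivAt.isLittleO.add_isBigOWith hlin hinv
    simpa [hf.eventually_left_inverse hf'0 |>.self_of_nhds] using this
  filter_upwards [hlip.bound, hf.eventually_right_inverse hf'0] with w hw hfw
  refine ⟨h w, ?_, hfw⟩
  rwa [mem_closedBall, dist_eq_norm, div_eq_inv_mul]

theorem isClosed_setOf_mem_image_closedBall_mul {X Y : Type*} [PseudoMetricSpace X] [ProperSpace X]
    [TopologicalSpace Y] [T2Space Y] {f : X → Y} {γ : ℝ → Y} {y : X} {C : ℝ} (hC : 0 ≤ C)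
    (hf : ContinuousOn f (closedBall y C)) (hγ : Continuous γ) :
    IsClosed ({u | γ u ∈ f '' closedBall y (C * u)} ∩ Icc 0 1) := by
  set K := Icc (0 : ℝ) 1 ×ˢ closedBall y C
  set T := K ∩ (fun p : ℝ × X => (f p.2, γ p.1)) ⁻¹' diagonal Y ∩ {p | dist p.2 y ≤ C * p.1}
  have hT : IsCompact T := by
    refine (isCompact_Icc.prod (isCompact_closedBall y C)).of_isClosed_subset
      (IsClosed.inter ?_ (isClosed_le (by fun_prop) (by fun_prop))) fun p hp => hp.1.1
    exact ((hf.comp continuousOn_snd fun p hp => hp.2).prodMk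
      (hγ.comp continuous_fst).continuousOn).preimage_isClosed_of_isClosed
      (isClosed_Icc.prod isClosed_closedBall) isClosed_diagonal
  convert (hT.image continuous_fst).isClosed using 1
  ext u
  constructor
  · rintro ⟨⟨z, hz, hfz⟩, hu⟩
    have hCu : C * u ≤ C := mul_le_of_le_one_right hC hu.2
    exact ⟨(u, z), ⟨⟨⟨hu, closedBall_subset_closedBall hCu hz⟩, hfz⟩, hz⟩, rfl⟩
  · rintro ⟨⟨u, z⟩, ⟨⟨⟨hu, -⟩, hfz⟩, hz⟩, rfl⟩
    exact ⟨⟨z, hz, hfz⟩, hu⟩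

theorem ball_subset_image_ball_of_lt_norm_deriv {𝕜 : Type*} [RCLike 𝕜] {f f' : 𝕜 → 𝕜} {y : 𝕜}
    {s m : ℝ} (hm : 0 < m) (hf : ∀ z ∈ ball y s, HasStrictDerivAt f (f' z) z)
    (hf' : ∀ z ∈ ball y s, m < ‖f' z‖) :
    ball (f y) (m * s) ⊆ f '' ball y s := by
  intro w hw
  set Δ := w - f y
  set C := ‖Δ‖ / m
  set γ : ℝ → 𝕜 := fun u => f y + u • Δ
  have hCs : C < s := by
    rw [mem_ball, dist_eq_norm] at hw
    rwa [div_lt_iff₀ hm, mul_comm]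
  have hcont : ContinuousOn f (closedBall y C) := fun z hz =>
    (hf z (closedBall_subset_ball hCs hz)).hasDerivAt.continuousAt.continuousWithinAt
  have hS : Icc 0 1 ⊆ {u | γ u ∈ f '' closedBall y (C * u)} := by
    refine IsClosed.Icc_subset_of_forall_mem_nhdsWithin
      (isClosed_setOf_mem_image_closedBall_mul (by positivity) hcont (by fun_prop))
      ⟨y, by simp, by simp [γ]⟩ ?_
    rintro u ⟨⟨z, hz, hfz⟩, hu0, hu1⟩
    have hzs : z ∈ ball y s :=
      closedBall_subset_ball ((mul_le_of_le_one_right (by positivity) hu1.le).trans_lt hCs) hz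
    have hγ : Tendsto γ (𝓝 u) (𝓝 (f z)) := hfz ▸ (by fun_prop : Continuous γ).tendsto u
    filter_upwards [nhdsWithin_le_nhds (hγ.eventually
      ((hf z hzs).eventually_mem_image_closedBall hm (hf' z hzs))), self_mem_nhdsWithin]
      with u' ⟨z', hz', hfz'⟩ (hu' : u < u')
    refine ⟨z', ?_, hfz'⟩
    have hstep : ‖γ u' - f z‖ = (u' - u) * ‖Δ‖ := by
      rw [hfz, show γ u' - γ u = (u' - u) • Δ by simp only [γ]; rw [sub_smul]; abel,
        norm_smul, Real.norm_of_nonneg (by linarith)]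
    rw [mem_closedBall] at hz hz' ⊢
    calc dist z' y ≤ dist z' z + dist z y := dist_triangle _ _ _
      _ ≤ (u' - u) * ‖Δ‖ / m + C * u := by rw [← hstep]; gcongr
      _ = C * u' := by simp only [C]; ring
  obtain ⟨z, hz, hfz⟩ := hS ⟨zero_le_one, le_rfl⟩
  exact ⟨z, closedBall_subset_ball (by simpa using hCs) hz, by simpa [γ, Δ] using hfz⟩

theorem image_ball_subset_ball_of_norm_deriv_le {𝕜 G : Type*} [RCLike 𝕜] [NormedAddCommGroup G]
    [NormedSpace 𝕜 G] {f : 𝕜 → G} {x : 𝕜} {r M : ℝ} (hM : 0 < M)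
    (hf : DifferentiableOn 𝕜 f (ball x r)) (hf' : ∀ z ∈ ball x r, ‖deriv f z‖ ≤ M) :
    f '' ball x r ⊆ ball (f x) (M * r) := by
  rintro _ ⟨z, hz, rfl⟩
  have hx : x ∈ ball x r := mem_ball_self (pos_of_mem_ball hz)
  rw [mem_ball, dist_eq_norm]
  calc ‖f z - f x‖ ≤ M * ‖z - x‖ :=
        (convex_ball x r).norm_image_sub_le_of_norm_deriv_le
          (fun w hw => hf.differentiableAt (isOpen_ball.mem_nhds hw)) hf' hx hz
    _ < M * r := by gcongr; rwa [← dist_eq_norm, ← mem_ball]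

theorem koebe_image_disk_bounds_general
    (x : ℂ) (r₀ v t : ℝ) (hr₀ : 0 < r₀)
    (g : ℂ → ℂ)
    (hdiff : DifferentiableOn ℂ g (Metric.ball x r₀))
    (hvpos : 0 < v)
    (ht : t ∈ Set.Ioo (0 : ℝ) 1)
    (hbound : ∀ z ∈ Metric.ball x (t * r₀),
      v / 2 ≤ ‖deriv g z‖ ∧ ‖deriv g z‖ ≤ 2 * v) :
    (∀ (y : ℂ) (s : ℝ), 0 < s → Metric.ball y s ⊆ Metric.ball x (t * r₀) →
      Metric.ball (g y) (v * s / 8) ⊆ g '' Metric.ball y s) ∧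
    (∀ r : ℝ, 0 < r → Metric.ball x r ⊆ Metric.ball x (t * r₀) →
      g '' Metric.ball x r ⊆ Metric.ball (g x) (2 * v * r)) := by
  have hdiff' : DifferentiableOn ℂ g (ball x (t * r₀)) :=
    hdiff.mono (ball_subset_ball (mul_le_of_le_one_left hr₀.le ht.2.le))
  have hstrict : ∀ z ∈ ball x (t * r₀), HasStrictDerivAt g (deriv g z) z := fun z hz =>
    (hdiff'.analyticAt (isOpen_ball.mem_nhds hz)).hasStrictDerivAt
  refine ⟨fun y s hs hys => ?_, fun r _ hxr => ?_⟩
  · calc ball (g y) (v * s / 8) ⊆ ball (g y) (v / 4 * s) := ball_subset_ball (by nlinarith)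
      _ ⊆ g '' ball y s := ball_subset_image_ball_of_lt_norm_deriv (by positivity)
          (fun z hz => hstrict z (hys hz)) fun z hz => by linarith [(hbound z (hys hz)).1]
  · exact image_ball_subset_ball_of_norm_deriv_le (by positivity) (hdiff'.mono hxr)
      fun z hz => (hbound z (hxr hz)).2

/-- Koebe-type estimates for a univalent map `g` on `D(x, r₀)` with
`v/2 ≤ |g'| ≤ 2v` on `D(x, t r₀)`: inner disks and outer disks for images. -/
theorem koebe_image_disk_bounds
    (x : ℂ) (r₀ v t : ℝ) (hr₀ : 0 < r₀)
    (g : ℂ → ℂ)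
    (hdiff : DifferentiableOn ℂ g (Metric.ball x r₀))
    (hinj : Set.InjOn g (Metric.ball x r₀))
    (hv : v = ‖deriv g x‖) (hvpos : 0 < v)
    (ht : t ∈ Set.Ioo (0 : ℝ) 1)
    (hbound : ∀ z ∈ Metric.ball x (t * r₀),
      v / 2 ≤ ‖deriv g z‖ ∧ ‖deriv g z‖ ≤ 2 * v) :
    (∀ (y : ℂ) (s : ℝ), 0 < s → Metric.ball y s ⊆ Metric.ball x (t * r₀) →
      Metric.ball (g y) (v * s / 8) ⊆ g '' Metric.ball y s) ∧
    (∀ r : ℝ, 0 < r → Metric.ball x r ⊆ Metric.ball x (t * r₀) →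
      g '' Metric.ball x r ⊆ Metric.ball (g x) (2 * v * r)) :=
  koebe_image_disk_bounds_general x r₀ v t hr₀ g hdiff hvpos ht hbound
end
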